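/- Let n ≥ 1 and let w : (0,∞) → ℝ be a C¹-smooth increasing function such that the measure ν on ℝⁿ with density x ↦ e^{−w(|x|)} is finite. Then for every θ ∈ ℝⁿ, the function h(x) = ⟨x, θ⟩ satisfies ∫ (w'(|x|)/|x|) h(x)² dν(x) = ∫ |∇h(x)|² dν(x), i.e. ∫ (w'(|x|)/|x|) ⟨x,θ⟩² e^{−w(|x|)} dx = |θ|² ∫ e^{−w(|x|)} dx. -/

import Mathlib

/-!
Integrating by parts in the radial variable gives
`∫ w'(|x|) |x| e^{-w(|x|)} dx = n ∫ e^{-w(|x|)} dx`; the boundary terms `r^n e^{-w(r)}` vanish at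
`0` and at `∞` because `e^{-w}` is decreasing and `r^{n-1} e^{-w(r)}` is integrable.
Since `θ ↦ ∫ (w'(|x|)/|x|) ⟨x, θ⟩² e^{-w(|x|)} dx` is invariant under reflections, it is a
multiple of `|θ|²`, and summing it over an orthonormal basis identifies the multiple as
`1/n · ∫ w'(|x|) |x| e^{-w(|x|)} dx`.
-/

open MeasureTheory Set Filter Topology
open scoped RealInnerProductSpace

theorem MeasureTheory.IntegrableOn.intervalIntegrable_of_Ioi {f : ℝ → ℝ} {c a b : ℝ}
    (hf : IntegrableOn f (Ioi c)) (ha : c ≤ a) (hb : c ≤ b) : IntervalIntegrable f volume a b :=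
  (intervalIntegrable_iff.mpr <| hf.mono_set fun _ hr => (le_min ha hb).trans_lt hr.1)

theorem MeasureTheory.IntegrableOn.tendsto_intervalIntegral_nhdsGT_zero {f : ℝ → ℝ}
    (hf : IntegrableOn f (Ioi 0)) :
    Tendsto (fun r => ∫ t in (0 : ℝ)..r, f t) (𝓝[>] 0) (𝓝 0) := by
  have hcont : ContinuousWithinAt (fun r => ∫ t in (0 : ℝ)..r, f t) (Icc 0 1) 0 :=
    intervalIntegral.continuousWithinAt_primitive (measure_singleton 0)
      (by simpa using hf.intervalIntegrable_of_Ioi le_rfl zero_le_one)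
  simpa using (hcont.mono_of_mem_nhdsWithin
    (mem_of_superset (Ioc_mem_nhdsGT one_pos) Ioc_subset_Icc_self)).tendsto

section RadialIntegrationByParts

variable {φ φ' : ℝ → ℝ} {n : ℕ}

theorem AntitoneOn.pow_sub_pow_mul_le_integral (hφ : AntitoneOn φ (Ioi 0)) {a b : ℝ} (ha : 0 ≤ a)
    (hab : a ≤ b) (hint : IntervalIntegrable (fun r => r ^ n * φ r) volume a b) :
    (b ^ (n + 1) - a ^ (n + 1)) * φ b ≤ (n + 1) * ∫ r in a..b, r ^ n * φ r := by
  have hconst : (b ^ (n + 1) - a ^ (n + 1)) * φ b = (n + 1) * ∫ r in a..b, r ^ n * φ b := by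
    rw [intervalIntegral.integral_mul_const, integral_pow]
    field_simp
  rw [hconst]
  gcongr
  rw [intervalIntegral.integral_of_le hab, intervalIntegral.integral_of_le hab]
  refine setIntegral_mono_on (by fun_prop : Continuous fun r : ℝ => r ^ n * φ b).integrableOn_Ioc
    hint.1 measurableSet_Ioc fun r hr => ?_
  have hr0 : 0 < r := ha.trans_lt hr.1
  exact mul_le_mul_of_nonneg_left (hφ hr0 (hr0.trans_le hr.2) hr.2) (by positivity)

variable (hφ : AntitoneOn φ (Ioi 0)) (hφ0 : ∀ r ∈ Ioi 0, 0 ≤ φ r)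
  (hint : IntegrableOn (fun r => r ^ n * φ r) (Ioi 0))
include hφ hφ0 hint

theorem AntitoneOn.tendsto_pow_succ_mul_nhdsGT_zero :
    Tendsto (fun r => r ^ (n + 1) * φ r) (𝓝[>] 0) (𝓝 0) := by
  refine squeeze_zero' ?_ ?_
    (by simpa using hint.tendsto_intervalIntegral_nhdsGT_zero.const_mul ((n : ℝ) + 1))
  · filter_upwards [self_mem_nhdsWithin] with r hr
    exact mul_nonneg (pow_nonneg (le_of_lt hr) _) (hφ0 r hr)
  · filter_upwards [self_mem_nhdsWithin] with r (hr : 0 < r)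
    simpa using hφ.pow_sub_pow_mul_le_integral le_rfl hr.le
      (hint.intervalIntegrable_of_Ioi le_rfl hr.le)

theorem AntitoneOn.tendsto_pow_succ_mul_atTop :
    Tendsto (fun r => r ^ (n + 1) * φ r) atTop (𝓝 0) := by
  have hF := intervalIntegral_tendsto_integral_Ioi 0 hint tendsto_id
  have hhalf : Tendsto (fun r => ∫ t in (r / 2)..r, t ^ n * φ t) atTop (𝓝 0) := by
    refine (by simpa using hF.sub (hF.comp (tendsto_id.atTop_div_const two_pos)) :
      Tendsto (fun r => (∫ t in (0 : ℝ)..r, t ^ n * φ t) - ∫ t in (0 : ℝ)..(r / 2), t ^ n * φ t)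
        atTop (𝓝 0)).congr' ?_
    filter_upwards [eventually_gt_atTop 0] with r hr
    exact intervalIntegral.integral_interval_sub_left
      (hint.intervalIntegrable_of_Ioi le_rfl hr.le)
      (hint.intervalIntegrable_of_Ioi le_rfl (by linarith))
  refine squeeze_zero' ?_ ?_ (by simpa using hhalf.const_mul (2 * ((n : ℝ) + 1)))
  · filter_upwards [eventually_gt_atTop 0] with r hr
    exact mul_nonneg (pow_nonneg hr.le _) (hφ0 r hr)
  · filter_upwards [eventually_gt_atTop 0] with r hr
    have hbound := hφ.pow_sub_pow_mul_le_integral (a := r / 2) (by linarith) (by linarith)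
      (hint.intervalIntegrable_of_Ioi (by linarith) hr.le)
    have hpow : (r / 2) ^ (n + 1) ≤ r ^ (n + 1) / 2 := by
      rw [div_pow, div_le_div_iff_of_pos_left (by positivity) (by positivity) two_pos]
      exact le_self_pow₀ one_le_two n.succ_ne_zero
    nlinarith [hφ0 r hr]

theorem AntitoneOn.integrableOn_and_integral_pow_succ_mul_neg_deriv
    (hderiv : ∀ r ∈ Ioi 0, HasDerivAt φ (φ' r) r) :
    IntegrableOn (fun r => r ^ (n + 1) * -φ' r) (Ioi 0) ∧
      ∫ r in Ioi 0, r ^ (n + 1) * -φ' r = (n + 1) * ∫ r in Ioi 0, r ^ n * φ r := by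
  -- `G' = r ^ (n + 1) * -φ'` is nonnegative, so the limits of `G` at `0⁺` and `∞` give both the
  -- integrability of `G'` and its integral.
  set G : ℝ → ℝ := fun r => (n + 1) * (∫ t in (0 : ℝ)..r, t ^ n * φ t) - r ^ (n + 1) * φ r
  have hcont : ContinuousOn (fun r => r ^ n * φ r) (Ioi 0) := fun r hr =>
    ((continuous_pow n).continuousAt.mul (hderiv r hr).continuousAt).continuousWithinAt
  have hG0 : ContinuousWithinAt G (Ici 0) 0 := by
    rw [← continuousWithinAt_Ioi_iff_Ici, ContinuousWithinAt]
    simpa [G] using (hint.tendsto_intervalIntegral_nhdsGT_zero.const_mul ((n : ℝ) + 1)).sub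
      (hφ.tendsto_pow_succ_mul_nhdsGT_zero hφ0 hint)
  have hG : ∀ r ∈ Ioi 0, HasDerivAt G (r ^ (n + 1) * -φ' r) r := by
    intro r hr
    have hprim := intervalIntegral.integral_hasDerivAt_right
      (hint.intervalIntegrable_of_Ioi le_rfl (le_of_lt hr))
      (hcont.stronglyMeasurableAtFilter isOpen_Ioi r hr)
      (hcont.continuousAt (isOpen_Ioi.mem_nhds hr))
    refine ((hprim.const_mul ((n : ℝ) + 1)).sub
      ((hasDerivAt_pow (n + 1) r).mul (hderiv r hr))).congr_deriv ?_
    push_cast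
    ring
  have hG' : ∀ r ∈ Ioi 0, 0 ≤ r ^ (n + 1) * -φ' r := by
    intro r hr
    have : φ' r ≤ 0 := by
      rw [← (hderiv r hr).hasDerivWithinAt.derivWithin (isOpen_Ioi.uniqueDiffWithinAt hr)]
      exact hφ.derivWithin_nonpos
    exact mul_nonneg (pow_nonneg (le_of_lt hr) _) (neg_nonneg.mpr this)
  have hGtop : Tendsto G atTop (𝓝 ((n + 1) * (∫ r in Ioi 0, r ^ n * φ r) - 0)) :=
    ((intervalIntegral_tendsto_integral_Ioi 0 hint tendsto_id).const_mul _).sub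
      (hφ.tendsto_pow_succ_mul_atTop hφ0 hint)
  refine ⟨integrableOn_Ioi_deriv_of_nonneg hG0 hG hG' hGtop, ?_⟩
  rw [integral_Ioi_of_hasDerivAt_of_nonneg hG0 hG hG' hGtop]
  simp [G]

end RadialIntegrationByParts

section Radial

variable {E : Type*} [NormedAddCommGroup E] [NormedSpace ℝ E] [FiniteDimensional ℝ E]
  [MeasurableSpace E] [BorelSpace E] [Nontrivial E] (μ : Measure E) [μ.IsAddHaarMeasure]

theorem integrable_and_integral_norm_mul_neg_deriv_fun_norm {φ φ' : ℝ → ℝ}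
    (hφ : AntitoneOn φ (Ioi 0)) (hφ0 : ∀ r ∈ Ioi 0, 0 ≤ φ r)
    (hderiv : ∀ r ∈ Ioi 0, HasDerivAt φ (φ' r) r) (hint : Integrable (fun x => φ ‖x‖) μ) :
    Integrable (fun x => ‖x‖ * -φ' ‖x‖) μ ∧
      ∫ x, ‖x‖ * -φ' ‖x‖ ∂μ = Module.finrank ℝ E * ∫ x, φ ‖x‖ ∂μ := by
  obtain ⟨k, hk⟩ : ∃ k, Module.finrank ℝ E = k + 1 :=
    Nat.exists_eq_add_one.mpr Module.finrank_pos
  have hpow : ∀ y : ℝ, y ^ k • (y * -φ' y) = y ^ (k + 1) * -φ' y := fun y => by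
    rw [smul_eq_mul, pow_succ, mul_assoc]
  rw [integrable_fun_norm_addHaar μ, hk, Nat.add_sub_cancel] at hint
  obtain ⟨hint', hintegral⟩ :=
    hφ.integrableOn_and_integral_pow_succ_mul_neg_deriv hφ0 (by simpa using hint) hderiv
  constructor
  · rw [integrable_fun_norm_addHaar μ (f := fun r => r * -φ' r), hk, Nat.add_sub_cancel]
    simpa only [hpow] using hint'
  · rw [integral_fun_norm_addHaar μ (fun r => r * -φ' r), integral_fun_norm_addHaar μ φ, hk,
      Nat.add_sub_cancel]
    simp only [hpow, hintegral, smul_eq_mul, nsmul_eq_mul]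
    push_cast
    ring

end Radial

section Symmetry

variable {E : Type*} [NormedAddCommGroup E] [InnerProductSpace ℝ E] [FiniteDimensional ℝ E]
  [MeasurableSpace E] [BorelSpace E] (g : ℝ → ℝ)

lemma integral_fun_norm_mul_inner_sq_map (L : E ≃ₗᵢ[ℝ] E) (θ : E) :
    ∫ x, g ‖x‖ * ⟪x, L θ⟫ ^ 2 = ∫ x, g ‖x‖ * ⟪x, θ⟫ ^ 2 := by
  rw [← L.measurePreserving.integral_comp L.toHomeomorph.measurableEmbedding]
  simp

lemma integral_fun_norm_mul_inner_sq_eq_of_norm_eq {θ θ' : E} (h : ‖θ‖ = ‖θ'‖) :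
    ∫ x, g ‖x‖ * ⟪x, θ⟫ ^ 2 = ∫ x, g ‖x‖ * ⟪x, θ'⟫ ^ 2 := by
  rw [← Submodule.reflection_sub h, integral_fun_norm_mul_inner_sq_map]

lemma integral_fun_norm_mul_inner_sq_eq_sq_norm_mul {u : E} (hu : ‖u‖ = 1) (θ : E) :
    ∫ x, g ‖x‖ * ⟪x, θ⟫ ^ 2 = ‖θ‖ ^ 2 * ∫ x, g ‖x‖ * ⟪x, u⟫ ^ 2 := by
  rw [integral_fun_norm_mul_inner_sq_eq_of_norm_eq g (θ' := ‖θ‖ • u) (by simp [norm_smul, hu]),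
    ← integral_const_mul]
  congr with x
  rw [inner_smul_right]
  ring

theorem finrank_mul_integral_fun_norm_mul_inner_sq [Nontrivial E]
    (hint : Integrable (fun x : E => g ‖x‖ * ‖x‖ ^ 2)) (θ : E) :
    Module.finrank ℝ E * ∫ x, g ‖x‖ * ⟪x, θ⟫ ^ 2 = ‖θ‖ ^ 2 * ∫ x : E, g ‖x‖ * ‖x‖ ^ 2 := by
  set b := stdOrthonormalBasis ℝ E
  have hmeas : AEStronglyMeasurable (fun x : E => g ‖x‖) := by
    refine (hint.aemeasurable.div (continuous_norm.pow 2 :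
      Continuous fun x : E => ‖x‖ ^ 2).aemeasurable).aestronglyMeasurable.congr ?_
    filter_upwards [compl_mem_ae_iff.mpr (measure_singleton (0 : E))] with x hx
    have hx0 : ‖x‖ ≠ 0 := norm_ne_zero_iff.mpr hx
    simp [field, hx0]
  have hint_b : ∀ i, Integrable (fun x => g ‖x‖ * ⟪x, b i⟫ ^ 2) := fun i => by
    refine hint.norm.mono'
      (hmeas.mul (by fun_prop : Continuous fun x => ⟪x, b i⟫ ^ 2).aestronglyMeasurable)
      (ae_of_all _ fun x => ?_)
    have hx : ⟪x, b i⟫ ^ 2 ≤ ‖x‖ ^ 2 := by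
      rw [← sq_abs]
      gcongr
      simpa [b.orthonormal.1 i] using abs_real_inner_le_norm x (b i)
    rw [norm_mul, norm_mul, Real.norm_eq_abs (_ ^ 2), abs_of_nonneg (sq_nonneg _)]
    exact mul_le_mul_of_nonneg_left (by simpa using hx) (norm_nonneg _)
  calc Module.finrank ℝ E * ∫ x, g ‖x‖ * ⟪x, θ⟫ ^ 2
      = ∑ i, ‖θ‖ ^ 2 * ∫ x, g ‖x‖ * ⟪x, b i⟫ ^ 2 := by
        simp [← integral_fun_norm_mul_inner_sq_eq_sq_norm_mul g (b.orthonormal.1 _) θ]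
    _ = ‖θ‖ ^ 2 * ∫ x, g ‖x‖ * ‖x‖ ^ 2 := by
        rw [← Finset.mul_sum, ← integral_finsetSum _ fun i _ => hint_b i]
        simp_rw [← Finset.mul_sum, b.sum_sq_inner_left]

end Symmetry

lemma integrable_of_isFiniteMeasure_withDensity_ofReal {α : Type*} [MeasurableSpace α]
    {μ : Measure α} {f : α → ℝ} (hf : AEStronglyMeasurable f μ) (hf0 : ∀ᵐ x ∂μ, 0 ≤ f x)
    (hfin : IsFiniteMeasure (μ.withDensity fun x => ENNReal.ofReal (f x))) : Integrable f μ := by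
  refine ⟨hf, (hasFiniteIntegral_iff_ofReal hf0).mpr ?_⟩
  simpa [withDensity_apply _ MeasurableSet.univ] using
    measure_lt_top (μ.withDensity fun x => ENNReal.ofReal (f x)) univ

lemma integrable_exp_neg_comp_norm {E : Type*} [NormedAddCommGroup E] [MeasurableSpace E]
    [OpensMeasurableSpace E] [SecondCountableTopology E] {μ : Measure E} [NullSingletonClass μ]
    {w : ℝ → ℝ}
    (hw : ContinuousOn w (Ioi 0))
    (hfin : IsFiniteMeasure (μ.withDensity fun x => ENNReal.ofReal (Real.exp (-w ‖x‖)))) :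
    Integrable (fun x => Real.exp (-w ‖x‖)) μ := by
  have hcont : ContinuousOn (fun x : E => Real.exp (-w ‖x‖)) {0}ᶜ :=
    (hw.comp continuous_norm.continuousOn fun _ hx => norm_pos_iff.mpr hx).neg.rexp
  refine integrable_of_isFiniteMeasure_withDensity_ofReal ?_
    (ae_of_all _ fun _ => (Real.exp_pos _).le) hfin
  simpa only [restrict_compl_singleton] using
    hcont.aestronglyMeasurable (μ := μ) (measurableSet_singleton 0).compl

theorem statement14 (n : ℕ) (hn : 1 ≤ n) (w : ℝ → ℝ)
    (hw_smooth : ContDiffOn ℝ 1 w (Set.Ioi (0 : ℝ)))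
    (hw_mono : MonotoneOn w (Set.Ioi (0 : ℝ)))
    (hfin : IsFiniteMeasure
      ((volume : Measure (EuclideanSpace ℝ (Fin n))).withDensity
        (fun x => ENNReal.ofReal (Real.exp (-w ‖x‖)))))
    (θ : EuclideanSpace ℝ (Fin n)) :
    ∫ x : EuclideanSpace ℝ (Fin n),
        (deriv w ‖x‖ / ‖x‖) * ⟪x, θ⟫ ^ 2 * Real.exp (-w ‖x‖) =
      ‖θ‖ ^ 2 * ∫ x : EuclideanSpace ℝ (Fin n), Real.exp (-w ‖x‖) := by
  have hdim : Module.finrank ℝ (EuclideanSpace ℝ (Fin n)) = n := finrank_euclideanSpace_fin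
  have : Nontrivial (EuclideanSpace ℝ (Fin n)) :=
    Module.nontrivial_of_finrank_pos (R := ℝ) (by omega)
  have hw : ∀ r ∈ Ioi (0 : ℝ), HasDerivAt w (deriv w r) r := fun r hr =>
    ((hw_smooth.differentiableOn one_ne_zero).differentiableAt (isOpen_Ioi.mem_nhds hr)).hasDerivAt
  obtain ⟨hrad_int, hrad⟩ := integrable_and_integral_norm_mul_neg_deriv_fun_norm volume
    (φ' := fun r => Real.exp (-w r) * -deriv w r)
    (fun _ ha _ hb hab => Real.exp_le_exp.mpr (neg_le_neg (hw_mono ha hb hab)))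
    (fun _ _ => (Real.exp_pos _).le) (fun r hr => (hw r hr).neg.exp)
    (integrable_exp_neg_comp_norm hw_smooth.continuousOn hfin)
  have hweight : ∀ r : ℝ, deriv w r / r * Real.exp (-w r) * r ^ 2 =
      r * -(Real.exp (-w r) * -deriv w r) := fun r => by
    rcases eq_or_ne r 0 with rfl | hr
    · simp
    · field_simp
  have hsym := finrank_mul_integral_fun_norm_mul_inner_sq (fun r => deriv w r / r * Real.exp (-w r))
    (by simpa only [hweight] using hrad_int) θ
  simp only [hweight, hrad, hdim] at hsym
  have hlhs : ∫ x : EuclideanSpace ℝ (Fin n), (deriv w ‖x‖ / ‖x‖) * ⟪x, θ⟫ ^ 2 * Real.exp (-w ‖x‖) =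
      ∫ x : EuclideanSpace ℝ (Fin n), deriv w ‖x‖ / ‖x‖ * Real.exp (-w ‖x‖) * ⟪x, θ⟫ ^ 2 := by
    congr with x
    ring
  rw [hlhs]
  refine mul_left_cancel₀ (by positivity : (n : ℝ) ≠ 0) ?_
  rw [hsym]
  ring
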